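/- For every integer d ≥ 2, the speed-(2,2) cop number of the d-dimensional hypercube is c_{2,2}(Q_d) = 2 if d = 3, and c_{2,2}(Q_d) = ⌊d/2⌋ otherwise. -/

import Mathlib

open SimpleGraph

variable {V : Type*}

/-- A cop of speed `s` may move from `u` to `v` by traversing at most `s` edges. -/
def copStep (G : SimpleGraph V) (s : ℕ) (u v : V) : Prop :=
  ∃ p : G.Walk u v, p.length ≤ s

/-- A robber of speed `s` may move from `u` to `v` by traversing at most `s` edges,
never passing through a vertex of `S` (the set of vertices occupied by cops). -/
def robberStep (G : SimpleGraph V) (s : ℕ) (S : Set V) (u v : V) : Prop :=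
  ∃ p : G.Walk u v, p.length ≤ s ∧ ∀ x ∈ p.support.tail, x ∉ S

/-- `CanCatch G sc sr n cops r` : cops (of speed `sc`) at positions `cops`, robber
(of speed `sr`) at `r`, cops about to move; the cops can force a capture within
`n` further rounds. -/
def CanCatch (G : SimpleGraph V) (sc sr : ℕ) {k : ℕ} : ℕ → (Fin k → V) → V → Prop
  | 0, cops, r => ∃ i, cops i = r
  | n + 1, cops, r => (∃ i, cops i = r) ∨
      ∃ cops' : Fin k → V, (∀ i, copStep G sc (cops i) (cops' i)) ∧
        ((∃ i, cops' i = r) ∨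
          ∀ r', robberStep G sr {x | ∃ i, cops' i = x} r r' →
            CanCatch G sc sr n cops' r')

/-- The speed-`(sc, sr)` cop number of `G`: the least number `k` of cops which have
a winning strategy when the cops move with speed `sc` and the robber with speed `sr`.
The ordinary cop number is `copNumber G 1 1`. -/
noncomputable def copNumber (G : SimpleGraph V) (sc sr : ℕ) : ℕ :=
  sInf {k : ℕ | ∃ cops : Fin k → V, ∀ r : V, ∃ n : ℕ, CanCatch G sc sr n cops r}

/-- The `s`-th power of `G` : distinct vertices are adjacent iff their distance
in `G` is at most `s`. -/
def graphPow (G : SimpleGraph V) (s : ℕ) : SimpleGraph V where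
  Adj u v := u ≠ v ∧ ∃ p : G.Walk u v, p.length ≤ s
  symm := ⟨by
    rintro u v ⟨h, p, hp⟩
    exact ⟨h.symm, p.reverse, by simpa using hp⟩⟩
  loopless := ⟨by rintro u ⟨h, -⟩; exact h rfl⟩

/-- The Cartesian (box) product of the family of graphs `T i`, `i : Fin d`. -/
def boxPi {d : ℕ} {V : Fin d → Type*} (T : ∀ i, SimpleGraph (V i)) :
    SimpleGraph (∀ i, V i) where
  Adj x y := ∃ i, (T i).Adj (x i) (y i) ∧ ∀ j, j ≠ i → x j = y j
  symm := ⟨by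
    rintro x y ⟨i, h, h'⟩
    exact ⟨i, h.symm, fun j hj => (h' j hj).symm⟩⟩
  loopless := ⟨by rintro x ⟨i, h, -⟩; exact (T i).irrefl h⟩

/-- The `d`-dimensional hypercube `Q_d`, the `d`-fold Cartesian product of `K₂`. -/
def hypercube (d : ℕ) : SimpleGraph (Fin d → Bool) :=
  boxPi fun _ : Fin d => (⊤ : SimpleGraph Bool)

namespace S16
open Finset

variable {d : ℕ}

abbrev Vtx (d : ℕ) := Fin d → Bool

/-- the set of coordinates where `x` and `y` differ -/
def dset (x y : Vtx d) : Finset (Fin d) := Finset.univ.filter (fun c => x c ≠ y c)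

@[simp] lemma mem_dset {x y : Vtx d} {c : Fin d} : c ∈ dset x y ↔ x c ≠ y c := by
  simp [dset]

lemma dset_comm (x y : Vtx d) : dset x y = dset y x := by
  ext c; simp [ne_comm]

@[simp] lemma dset_self (x : Vtx d) : dset x x = ∅ := by
  ext c; simp

lemma dset_eq_empty {x y : Vtx d} (h : dset x y = ∅) : x = y := by
  funext c
  by_contra hc
  exact absurd (mem_dset.2 hc) (by simp [h])

lemma dset_trans (x y z : Vtx d) : dset x z = symmDiff (dset x y) (dset y z) := by
  ext c
  simp only [mem_dset, Finset.mem_symmDiff, mem_dset]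
  rcases Bool.eq_false_or_eq_true (x c) with h1 | h1 <;>
    rcases Bool.eq_false_or_eq_true (y c) with h2 | h2 <;>
    rcases Bool.eq_false_or_eq_true (z c) with h3 | h3 <;>
    simp [h1, h2, h3]

/-- flip coordinates of `x` in the set `F` -/
def flipF (x : Vtx d) (F : Finset (Fin d)) : Vtx d :=
  fun c => if c ∈ F then !(x c) else x c

@[simp] lemma dset_flipF (x : Vtx d) (F : Finset (Fin d)) : dset x (flipF x F) = F := by
  ext c
  by_cases h : c ∈ F <;> simp [flipF, h]

lemma dset_flipF_right (x r : Vtx d) (F : Finset (Fin d)) :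
    dset x (flipF r F) = symmDiff (dset x r) F := by
  rw [dset_trans x r (flipF r F), dset_flipF]

lemma flipF_dset (x y : Vtx d) : flipF x (dset x y) = y := by
  funext c
  by_cases h : x c = y c
  · simp [flipF, h]
  · have : c ∈ dset x y := mem_dset.2 h
    simp only [flipF, this, if_pos]
    rcases Bool.eq_false_or_eq_true (x c) with h1 | h1 <;>
      rcases Bool.eq_false_or_eq_true (y c) with h2 | h2 <;>
      simp_all

lemma hyper_adj {x y : Vtx d} (c : Fin d) (h1 : x c ≠ y c) (h2 : ∀ j, j ≠ c → x j = y j) :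
    (hypercube d).Adj x y :=
  ⟨c, by simpa using h1, h2⟩

lemma dset_of_adj {x y : Vtx d} (h : (hypercube d).Adj x y) : ∃ c, dset x y = {c} := by
  obtain ⟨c, hc, hother⟩ := h
  refine ⟨c, ?_⟩
  ext j
  simp only [mem_dset, Finset.mem_singleton]
  constructor
  · intro hj
    by_contra hne
    exact hj (hother j hne)
  · rintro rfl
    simpa using hc

lemma card_dset_le_length {x y : Vtx d} (p : (hypercube d).Walk x y) :
    (dset x y).card ≤ p.length := by
  induction p with
  | nil => simp
  | @cons a b c hab p ih =>
    obtain ⟨e, he⟩ := dset_of_adj hab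
    have hsub : dset a c ⊆ insert e (dset b c) := by
      intro j hj
      rcases eq_or_ne j e with rfl | hne
      · exact Finset.mem_insert_self _ _
      · have : a j = b j := by
          by_contra hab'
          have : j ∈ dset a b := mem_dset.2 hab'
          rw [he] at this
          exact hne (Finset.mem_singleton.1 this)
        refine Finset.mem_insert_of_mem (mem_dset.2 ?_)
        rw [← this]
        exact mem_dset.1 hj
    calc (dset a c).card ≤ (insert e (dset b c)).card := Finset.card_le_card hsub
      _ ≤ (dset b c).card + 1 := Finset.card_insert_le _ _
      _ ≤ p.length + 1 := by omega
      _ = (SimpleGraph.Walk.cons hab p).length := by simp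

lemma exists_walk_aux : ∀ (n : ℕ) (x y : Vtx d), (dset x y).card = n →
    ∃ p : (hypercube d).Walk x y, p.length = n ∧
      ∀ z ∈ p.support.tail, (dset z y).card < n := by
  intro n
  induction n with
  | zero =>
    intro x y h
    have : x = y := dset_eq_empty (Finset.card_eq_zero.1 h)
    subst this
    exact ⟨SimpleGraph.Walk.nil, by simp, by simp⟩
  | succ n ih =>
    intro x y h
    have hne : (dset x y).Nonempty := Finset.card_pos.1 (by omega)
    obtain ⟨c, hc⟩ := hne
    set x' := flipF x {c} with hx'
    have hadj : (hypercube d).Adj x x' := by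
      refine hyper_adj c ?_ ?_
      · simp [hx', flipF]
      · intro j hj; simp [hx', flipF, hj]
    have hds : dset x' y = dset x y \ {c} := by
      ext j
      rcases eq_or_ne j c with rfl | hne'
      · have hxy : x j ≠ y j := mem_dset.1 hc
        have hx'y : x' j = y j := by
          simp only [hx', flipF, Finset.mem_singleton, if_pos rfl]
          rcases Bool.eq_false_or_eq_true (x j) with h1 | h1 <;>
            rcases Bool.eq_false_or_eq_true (y j) with h2 | h2 <;> simp_all
        simp [hx'y]
      · simp [mem_dset, hx', flipF, hne']
    have hcard : (dset x' y).card = n := by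
      rw [hds, Finset.card_sdiff_of_subset (by simpa using hc)]
      simp [h]
    obtain ⟨p, hl, ht⟩ := ih x' y hcard
    refine ⟨SimpleGraph.Walk.cons hadj p, by simp [hl], ?_⟩
    intro z hz
    rw [SimpleGraph.Walk.support_cons, List.tail_cons] at hz
    rcases (SimpleGraph.Walk.mem_support_iff p).1 hz with rfl | hz'
    · omega
    · have := ht z hz'
      omega


lemma copStep_iff {s : ℕ} {x y : Vtx d} :
    copStep (hypercube d) s x y ↔ (dset x y).card ≤ s := by
  constructor
  · rintro ⟨p, hp⟩
    exact (card_dset_le_length p).trans hp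
  · intro h
    obtain ⟨p, hl, -⟩ := exists_walk_aux (dset x y).card x y rfl
    exact ⟨p, by omega⟩

lemma robberStep_card {s : ℕ} {S : Set (Vtx d)} {x y : Vtx d}
    (h : robberStep (hypercube d) s S x y) : (dset x y).card ≤ s := by
  obtain ⟨p, hp, -⟩ := h
  exact (card_dset_le_length p).trans hp

lemma robberStep_of {S : Set (Vtx d)} {x y : Vtx d}
    (h : (dset x y).card ≤ 2) (hS : ∀ z, (dset z y).card ≤ 1 → z ∉ S) :
    robberStep (hypercube d) 2 S x y := by
  obtain ⟨p, hl, ht⟩ := exists_walk_aux (dset x y).card x y rfl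
  refine ⟨p, by omega, ?_⟩
  intro z hz
  have hlt := ht z hz
  exact hS z (by omega)

section Game

lemma canCatch_succ {G : SimpleGraph (Vtx d)} {sc sr k : ℕ} {cops : Fin k → Vtx d} {r : Vtx d} :
    ∀ {n : ℕ}, CanCatch G sc sr n cops r → CanCatch G sc sr (n + 1) cops r := by
  intro n
  induction n generalizing cops r with
  | zero => intro h; exact Or.inl h
  | succ n ih =>
    rintro (h | ⟨cops', hlegal, h⟩)
    · exact Or.inl h
    · refine Or.inr ⟨cops', hlegal, ?_⟩
      rcases h with h | h
      · exact Or.inl h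
      · exact Or.inr fun r' hr' => ih (h r' hr')

lemma canCatch_mono {G : SimpleGraph (Vtx d)} {sc sr k : ℕ} {cops : Fin k → Vtx d} {r : Vtx d}
    {n n' : ℕ} (h : n ≤ n') (hc : CanCatch G sc sr n cops r) : CanCatch G sc sr n' cops r := by
  induction n', h using Nat.le_induction with
  | base => exact hc
  | succ n' hn ih => exact canCatch_succ ih

lemma catch_now {k : ℕ} {cops : Fin k → Vtx d} {r : Vtx d} (i : Fin k)
    (h : (dset (cops i) r).card ≤ 2) (n : ℕ) :
    CanCatch (hypercube d) 2 2 (n + 1) cops r := by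
  refine Or.inr ⟨Function.update cops i r, ?_, Or.inl ⟨i, by simp⟩⟩
  intro j
  rcases eq_or_ne j i with rfl | hji
  · rw [Function.update_self]
    exact copStep_iff.2 h
  · rw [Function.update_of_ne hji]
    exact ⟨SimpleGraph.Walk.nil, by simp⟩

end Game

section Cards

lemma card_symmDiff (A C : Finset (Fin d)) :
    (symmDiff A C).card = (A \ C).card + (C \ A).card := by
  rw [symmDiff_def]
  rw [show (A \ C ⊔ C \ A) = (A \ C) ∪ (C \ A) from rfl]
  exact Finset.card_union_of_disjoint disjoint_sdiff_sdiff

lemma card_symmDiff_le (A C : Finset (Fin d)) :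
    (symmDiff A C).card ≤ A.card + C.card := by
  rw [card_symmDiff]
  have h1 : (A \ C).card ≤ A.card := Finset.card_le_card (Finset.sdiff_subset)
  have h2 : (C \ A).card ≤ C.card := Finset.card_le_card (Finset.sdiff_subset)
  omega

lemma card_sdiff_general (A C : Finset (Fin d)) :
    (A \ C).card = A.card - (A ∩ C).card := by
  rw [show A \ C = A \ (A ∩ C) by rw [Finset.sdiff_inter_self_left],
    Finset.card_sdiff_of_subset (Finset.inter_subset_left)]

lemma card_symmDiff_eq (A C : Finset (Fin d)) :
    (symmDiff A C).card = (A.card - (A ∩ C).card) + (C.card - (A ∩ C).card) := by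
  rw [card_symmDiff, card_sdiff_general, card_sdiff_general, Finset.inter_comm]

lemma sdiff_symmDiff_distrib (A C B : Finset (Fin d)) :
    (symmDiff A C) \ B = symmDiff (A \ B) (C \ B) := by
  ext x
  simp only [Finset.mem_sdiff, Finset.mem_symmDiff]
  tauto

lemma inter_symmDiff_distrib (A C B : Finset (Fin d)) :
    (symmDiff A C) ∩ B = symmDiff (A ∩ B) (C ∩ B) := by
  ext x
  simp only [Finset.mem_inter, Finset.mem_symmDiff]
  tauto

lemma card_inter_sdiff_split (A B : Finset (Fin d)) :
    A.card = (A ∩ B).card + (A \ B).card := by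
  rw [card_sdiff_general]
  have := Finset.card_le_card (Finset.inter_subset_left (s₁ := A) (s₂ := B))
  omega

lemma symmDiff_of_subset {S A : Finset (Fin d)} (h : S ⊆ A) :
    symmDiff A S = A \ S := by
  ext x
  simp only [Finset.mem_symmDiff, Finset.mem_sdiff]
  constructor
  · rintro (⟨h1, h2⟩ | ⟨h1, h2⟩)
    · exact ⟨h1, h2⟩
    · exact absurd (h h1) h2
  · rintro ⟨h1, h2⟩
    exact Or.inl ⟨h1, h2⟩

lemma empty_symmDiff (A : Finset (Fin d)) : symmDiff (∅ : Finset (Fin d)) A = A := by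
  ext x; simp [Finset.mem_symmDiff]

lemma symmDiff_empty (A : Finset (Fin d)) : symmDiff A (∅ : Finset (Fin d)) = A := by
  ext x; simp [Finset.mem_symmDiff]

lemma dset_flipF_left (x r : Vtx d) (F : Finset (Fin d)) :
    dset (flipF x F) r = symmDiff (dset x r) F := by
  rw [dset_trans (flipF x F) x r, dset_comm (flipF x F) x, dset_flipF, symmDiff_comm]

end Cards


section Upper

variable {m : ℕ} (B : Fin m → Finset (Fin d))

/-- difference of cop `i` from the virtual target -/
def Gx (cops : Fin m → Vtx d) (r : Vtx d) (i : Fin m) : Finset (Fin d) :=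
  symmDiff (dset (cops i) r) (B i)

lemma dset_eq_Gx (cops : Fin m → Vtx d) (r : Vtx d) (i : Fin m) :
    dset (cops i) r = symmDiff (Gx B cops r i) (B i) := by
  rw [Gx, symmDiff_assoc, symmDiff_self, symmDiff_bot]

/-- the set of unlocked cops -/
def Uset (cops : Fin m → Vtx d) (r : Vtx d) : Finset (Fin m) :=
  Finset.univ.filter (fun i => 3 ≤ (Gx B cops r i).card)

/-- the potential -/
def Mval (cops : Fin m → Vtx d) (r : Vtx d) : ℕ :=
  (Uset B cops r).card + ∑ i ∈ Uset B cops r, ((Gx B cops r i \ B i).card - 2)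

variable (hdisj : ∀ i j, i ≠ j → Disjoint (B i) (B j))
  (hcover : ∀ c : Fin d, ∃ i, c ∈ B i)
  (hcard : ∀ i, 1 ≤ (B i).card ∧ (B i).card ≤ 3)
  (hone : ∀ i j, (B i).card ≠ 2 → (B j).card ≠ 2 → i = j)
  (hex2 : ∃ i, (B i).card = 2)

omit hdisj in
include hcover hcard hone hex2 in
lemma round (cops : Fin m → Vtx d) (r : Vtx d) :
    ∃ cops' : Fin m → Vtx d, (∀ i, copStep (hypercube d) 2 (cops i) (cops' i)) ∧
      ∀ r' : Vtx d, (dset r r').card ≤ 2 →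
        (∃ i, (dset (cops' i) r').card ≤ 2) ∨ Mval B cops' r' < Mval B cops r := by
  classical
  set G : Fin m → Finset (Fin d) := Gx B cops r with hG
  have hchoice : ∀ i, ∃ S : Finset (Fin d),
      S ⊆ (G i \ B i) ∧ S.card = min 2 ((G i \ B i).card) := by
    intro i
    obtain ⟨S, hS1, hS2⟩ := Finset.exists_subset_card_eq (min_le_right 2 ((G i \ B i).card))
    exact ⟨S, hS1, hS2⟩
  choose S hSsub hScard using hchoice
  set u : Fin m → Finset (Fin d) := fun i => if 3 ≤ (G i).card then S i else G i with hu
  set cops' : Fin m → Vtx d := fun i => flipF (cops i) (u i) with hcops'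
  have hucard : ∀ i, (u i).card ≤ 2 := by
    intro i
    rw [show u i = if 3 ≤ (G i).card then S i else G i from rfl]
    by_cases h : 3 ≤ (G i).card
    · rw [if_pos h, hScard]; exact min_le_left _ _
    · rw [if_neg h]; omega
  have hGx' : ∀ i, Gx B cops' r i = symmDiff (G i) (u i) := by
    intro i
    rw [Gx, hcops', dset_flipF_left, symmDiff_comm (dset (cops i) r) (u i), symmDiff_assoc,
      ← Gx, ← hG, symmDiff_comm]
  have hlockedG : ∀ i, ¬ (3 ≤ (G i).card) → Gx B cops' r i = ∅ := by
    intro i hi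
    rw [hGx', show u i = if 3 ≤ (G i).card then S i else G i from rfl]
    simp [if_neg hi]
  have hunlockedG : ∀ i, 3 ≤ (G i).card → Gx B cops' r i = G i \ S i := by
    intro i hi
    rw [hGx', show u i = if 3 ≤ (G i).card then S i else G i from rfl, if_pos hi,
      symmDiff_of_subset ((hSsub i).trans (Finset.sdiff_subset))]
  refine ⟨cops', ?_, ?_⟩
  · intro i
    rw [copStep_iff, hcops', dset_flipF]
    exact hucard i
  intro r' hv
  set v : Finset (Fin d) := dset r r' with hvdef
  have hGx2 : ∀ i, Gx B cops' r' i = symmDiff (Gx B cops' r i) v := by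
    intro i
    rw [Gx, Gx, dset_trans (cops' i) r r', ← hvdef, symmDiff_comm (dset (cops' i) r) v,
      symmDiff_assoc, symmDiff_comm v]
  by_cases hcap : ∃ i, (dset (cops' i) r').card ≤ 2
  · exact Or.inl hcap
  push_neg at hcap
  right
  have hsurv : ∀ i, 3 ≤ (dset (cops' i) r').card := fun i => hcap i
  -- cards of blocks
  -- locked cops stay locked
  have hUsub : Uset B cops' r' ⊆ Uset B cops r := by
    intro i hi
    simp only [Uset, Finset.mem_filter, Finset.mem_univ, true_and] at hi ⊢
    by_contra hloc
    rw [hGx2, hlockedG i hloc, empty_symmDiff] at hi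
    omega
  -- X monotone for unlocked cops
  have hXmono : ∀ i, 3 ≤ (G i).card →
      (Gx B cops' r' i \ B i).card ≤ ((G i \ B i).card - 2) + (v \ B i).card := by
    intro i hi
    rw [hGx2, hunlockedG i hi, sdiff_symmDiff_distrib]
    have h1 : ((G i \ S i) \ B i) = (G i \ B i) \ S i := sdiff_right_comm _ _ _
    rw [h1]
    have h2 : ((G i \ B i) \ S i).card = (G i \ B i).card - 2 ∨
        ((G i \ B i) \ S i).card = 0 := by
      rw [Finset.card_sdiff_of_subset (hSsub i), hScard]
      rcases le_or_gt 2 ((G i \ B i).card) with h | h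
      · left; omega
      · right; omega
    calc (symmDiff ((G i \ B i) \ S i) (v \ B i)).card
        ≤ ((G i \ B i) \ S i).card + (v \ B i).card := card_symmDiff_le _ _
      _ ≤ ((G i \ B i).card - 2) + (v \ B i).card := by
          rcases h2 with h | h <;> omega
  have hvB : ∀ i, (v \ B i).card ≤ v.card := fun i => Finset.card_le_card Finset.sdiff_subset
  -- main case analysis
  by_cases hlock : ∃ i ∈ Uset B cops r, (Gx B cops' r' i).card ≤ 2
  · -- some cop newly locks
    obtain ⟨i0, hi0U, hi0⟩ := hlock
    have hssub : Uset B cops' r' ⊂ Uset B cops r := by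
      refine ⟨hUsub, fun hsub => ?_⟩
      have := hsub hi0U
      simp only [Uset, Finset.mem_filter, Finset.mem_univ, true_and] at this
      omega
    have hc1 : (Uset B cops' r').card < (Uset B cops r).card := Finset.card_lt_card hssub
    have hc2 : ∑ i ∈ Uset B cops' r', ((Gx B cops' r' i \ B i).card - 2)
        ≤ ∑ i ∈ Uset B cops r, ((G i \ B i).card - 2) := by
      refine (Finset.sum_le_sum ?_).trans (Finset.sum_le_sum_of_subset hUsub)
      intro i hi
      have hiU : 3 ≤ (G i).card := by
        have := hUsub hi
        simpa [Uset] using this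
      have := hXmono i hiU
      have := hvB i
      omega
    rw [Mval, Mval]
    simp only [← hG]
    omega
  · -- no cop locks : U' = U, find strict decrease in X
    push_neg at hlock
    have hUU : ∀ i ∈ Uset B cops r, 3 ≤ (Gx B cops' r' i).card := fun i hi => hlock i hi
    have hUeq : Uset B cops' r' = Uset B cops r := by
      refine Finset.Subset.antisymm hUsub ?_
      intro i hi
      simp only [Uset, Finset.mem_filter, Finset.mem_univ, true_and]
      exact hUU i hi
    -- card of dset cops' r' in terms of G2
    have hdsetcard : ∀ i, (dset (cops' i) r').card
        = (Gx B cops' r' i \ B i).card + ((B i).card - (Gx B cops' r' i ∩ B i).card) := by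
      intro i
      rw [dset_eq_Gx B cops' r' i, card_symmDiff, card_sdiff_general (B i),
        Finset.inter_comm]
    -- strict decrease at some j ∈ U
    have key : ∃ j ∈ Uset B cops r,
        (Gx B cops' r' j \ B j).card - 2 < (G j \ B j).card - 2 := by
      by_cases htouch : ∃ c ∈ v, ∃ j ∈ Uset B cops r, c ∈ B j
      · obtain ⟨c, hcv, j, hjU, hcB⟩ := htouch
        have hjG : 3 ≤ (G j).card := by simpa [Uset] using hjU
        have hvBj : (v \ B j).card ≤ v.card - 1 := by
          have : v \ B j ⊆ v \ {c} := by
            intro x hx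
            simp only [Finset.mem_sdiff, Finset.mem_singleton] at hx ⊢
            exact ⟨hx.1, fun h => hx.2 (h ▸ hcB)⟩
          calc (v \ B j).card ≤ (v \ {c}).card := Finset.card_le_card this
            _ = v.card - 1 := by rw [Finset.card_sdiff_of_subset (by simpa using hcv)]; simp
        have hoj : 3 ≤ (G j \ B j).card := by
          by_contra hoj
          push_neg at hoj
          -- then o2 ≤ 1, h2 ≥ 2, block card ≥ 4 : contradiction
          have ho2 : (Gx B cops' r' j \ B j).card ≤ 1 := by
            have := hXmono j hjG
            omega
          have hG2 : (Gx B cops' r' j).card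
              = (Gx B cops' r' j ∩ B j).card + (Gx B cops' r' j \ B j).card :=
            card_inter_sdiff_split _ _
          have h2ge : 2 ≤ (Gx B cops' r' j ∩ B j).card := by
            have := hUU j hjU
            omega
          have hinter : (Gx B cops' r' j ∩ B j).card ≤ (B j).card :=
            Finset.card_le_card (Finset.inter_subset_right)
          have := hsurv j
          rw [hdsetcard j] at this
          have := (hcard j).2
          omega
        refine ⟨j, hjU, ?_⟩
        have := hXmono j hjG
        omega
      · push_neg at htouch
        by_cases hv0 : v = ∅
        · -- robber stands still : any unlocked size-2 block decreases
          have hpairU : ∃ j ∈ Uset B cops r, (B j).card = 2 := by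
            by_contra hpair
            push_neg at hpair
            obtain ⟨j2, hj2⟩ := hex2
            have hj2U : j2 ∉ Uset B cops r := fun h => (hpair j2 h) hj2
            have hj2G : ¬ 3 ≤ (G j2).card := by
              simpa [Uset] using hj2U
            have := hsurv j2
            rw [dset_eq_Gx B cops' r' j2, hGx2, hlockedG j2 hj2G, empty_symmDiff, hv0,
              empty_symmDiff] at this
            omega
          obtain ⟨j, hjU, hjB⟩ := hpairU
          have hjG : 3 ≤ (G j).card := by simpa [Uset] using hjU
          refine ⟨j, hjU, ?_⟩
          have hexact : Gx B cops' r' j = G j \ S j := by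
            rw [hGx2, hunlockedG j hjG, hv0, symmDiff_empty]
          have hin : (Gx B cops' r' j ∩ B j).card ≤ 2 := by
            calc (Gx B cops' r' j ∩ B j).card ≤ (B j).card :=
                Finset.card_le_card (Finset.inter_subset_right)
              _ = 2 := hjB
          have hsplit : (Gx B cops' r' j).card
              = (Gx B cops' r' j ∩ B j).card + (Gx B cops' r' j \ B j).card :=
            card_inter_sdiff_split _ _
          have ho2 : (Gx B cops' r' j \ B j).card = (G j \ B j).card - 2 := by
            rw [hexact, sdiff_right_comm, Finset.card_sdiff_of_subset (hSsub j), hScard]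
            rcases le_or_gt 2 ((G j \ B j).card) with h | h
            · omega
            · omega
          have := hUU j hjU
          omega
        · -- nonempty robber move entirely inside locked blocks : impossible
          exfalso
          obtain ⟨c0, hc0⟩ := Finset.nonempty_iff_ne_empty.2 hv0
          obtain ⟨j0, hj0⟩ := hcover c0
          have hj0U : j0 ∉ Uset B cops r := by
            intro h
            exact htouch c0 hc0 j0 h hj0
          have hj0G : ¬ 3 ≤ (G j0).card := by simpa [Uset] using hj0U
          -- distance of a locked cop i : |symmDiff v (B i)|
          have hlockdist : ∀ i, ¬ 3 ≤ (G i).card →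
              (dset (cops' i) r').card = (v.card - (v ∩ B i).card)
                + ((B i).card - (v ∩ B i).card) := by
            intro i hi
            rw [dset_eq_Gx B cops' r' i, hGx2, hlockedG i hi, empty_symmDiff,
              card_symmDiff_eq]
          have hvcard : v.card ≤ 2 := hv
          have hinter0 : 1 ≤ (v ∩ B j0).card := by
            refine Finset.card_pos.2 ⟨c0, ?_⟩
            simp [hc0, hj0]
          have hintle : ∀ i, (v ∩ B i).card ≤ v.card :=
            fun i => Finset.card_le_card (Finset.inter_subset_left)
          have hd0 := hsurv j0
          rw [hlockdist j0 hj0G] at hd0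
          have hB0le := (hcard j0).2
          have hB0ge := (hcard j0).1
          have h0 := hintle j0
          -- block j0 must have card 3, with |v ∩ B j0| = 1, |v| = 2
          have hB03 : (B j0).card = 3 ∧ (v ∩ B j0).card = 1 ∧ v.card = 2 := by
            omega
          obtain ⟨hB03, hp1, hv2⟩ := hB03
          -- the other coordinate of v lies in another non-pair block
          have hvd : (v \ B j0).Nonempty := by
            rw [← Finset.card_pos, card_sdiff_general]
            omega
          obtain ⟨c1, hc1⟩ := hvd
          obtain ⟨j1, hj1⟩ := hcover c1
          have hc1v : c1 ∈ v := (Finset.mem_sdiff.1 hc1).1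
          have hc1n : c1 ∉ B j0 := (Finset.mem_sdiff.1 hc1).2
          have hne : j1 ≠ j0 := fun h => hc1n (h ▸ hj1)
          have hj1U : j1 ∉ Uset B cops r := by
            intro h
            exact htouch c1 hc1v j1 h hj1
          have hj1G : ¬ 3 ≤ (G j1).card := by simpa [Uset] using hj1U
          have hd1 := hsurv j1
          rw [hlockdist j1 hj1G] at hd1
          have hinter1 : 1 ≤ (v ∩ B j1).card := by
            refine Finset.card_pos.2 ⟨c1, ?_⟩
            simp [hc1v, hj1]
          have h1 := hintle j1
          have hB1le := (hcard j1).2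
          have hB1ge := (hcard j1).1
          have hB1ne2 : (B j1).card ≠ 2 := by omega
          exact hne (hone j1 j0 hB1ne2 (by omega))
    -- assemble the strict sum decrease
    obtain ⟨j, hjU, hjlt⟩ := key
    rw [Mval, Mval, hUeq]
    simp only [← hG]
    have hsum : ∑ i ∈ Uset B cops r, ((Gx B cops' r' i \ B i).card - 2)
        < ∑ i ∈ Uset B cops r, ((G i \ B i).card - 2) := by
      refine Finset.sum_lt_sum ?_ ⟨j, hjU, hjlt⟩
      intro i hi
      have hiG : 3 ≤ (G i).card := by simpa [Uset] using hi
      have := hXmono i hiG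
      have := hvB i
      omega
    omega

omit hdisj in
include hcover hcard hone hex2 in
lemma upper_ind : ∀ (N : ℕ) (cops : Fin m → Vtx d) (r : Vtx d), Mval B cops r ≤ N →
    CanCatch (hypercube d) 2 2 (N + 2) cops r := by
  intro N
  induction N with
  | zero =>
    intro cops r hM
    obtain ⟨cops', hlegal, hstep⟩ := round B hcover hcard hone hex2 cops r
    refine Or.inr ⟨cops', hlegal, Or.inr ?_⟩
    intro r' hrob
    rcases hstep r' (robberStep_card hrob) with ⟨i, hi⟩ | hlt
    · exact catch_now i hi 0
    · omega
  | succ N ih =>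
    intro cops r hM
    obtain ⟨cops', hlegal, hstep⟩ := round B hcover hcard hone hex2 cops r
    refine Or.inr ⟨cops', hlegal, Or.inr ?_⟩
    intro r' hrob
    rcases hstep r' (robberStep_card hrob) with ⟨i, hi⟩ | hlt
    · exact catch_now i hi (N + 1)
    · exact ih cops' r' (by omega)

omit hdisj in
include hcover hcard hone hex2 in
lemma upper_mem : ∃ cops : Fin m → Vtx d, ∀ r : Vtx d, ∃ n : ℕ,
    CanCatch (hypercube d) 2 2 n cops r := by
  refine ⟨fun _ _ => false, fun r => ⟨Mval B (fun _ _ => false) r + 2, ?_⟩⟩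
  exact upper_ind B hcover hcard hone hex2 _ _ _ le_rfl

end Upper

section Blocks

lemma card_filter_fin (d : ℕ) (p : ℕ → Prop) [DecidablePred p] :
    (Finset.univ.filter (fun c : Fin d => p (c : ℕ))).card = ((Finset.range d).filter p).card := by
  refine Finset.card_bij (fun c _ => (c : ℕ)) ?_ ?_ ?_
  · intro a ha
    simp only [Finset.mem_filter, Finset.mem_univ, true_and] at ha
    simp only [Finset.mem_filter, Finset.mem_range]
    exact ⟨a.2, ha⟩
  · intro a _ b _ h
    exact Fin.ext h
  · intro b hb
    simp only [Finset.mem_filter, Finset.mem_range] at hb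
    exact ⟨⟨b, hb.1⟩, by simp [hb.2], rfl⟩

lemma blocks_exist (m d : ℕ) (hm1 : 1 ≤ m) (hlow : 2 * (m - 1) < d)
    (hhigh : d ≤ 2 * (m - 1) + 3) (hm1e : m = 1 → d = 2) :
    ∃ B : Fin m → Finset (Fin d),
      (∀ c : Fin d, ∃ i, c ∈ B i) ∧ (∀ i, 1 ≤ (B i).card ∧ (B i).card ≤ 3) ∧
      (∀ i j, (B i).card ≠ 2 → (B j).card ≠ 2 → i = j) ∧ (∃ i, (B i).card = 2) := by
  classical
  set B : Fin m → Finset (Fin d) :=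
    fun i => Finset.univ.filter (fun c : Fin d => min ((c : ℕ) / 2) (m - 1) = (i : ℕ)) with hB
  have hcards : ∀ i : Fin m, (B i).card = if (i : ℕ) < m - 1 then 2 else d - 2 * (m - 1) := by
    intro i
    have hiv : (i : ℕ) < m := i.2
    rw [hB]
    rw [card_filter_fin d (fun c => min (c / 2) (m - 1) = (i : ℕ))]
    by_cases hi : (i : ℕ) < m - 1
    · rw [if_pos hi]
      have hset : (Finset.range d).filter (fun c => min (c / 2) (m - 1) = (i : ℕ))
          = {2 * (i : ℕ), 2 * (i : ℕ) + 1} := by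
        ext c
        simp only [Finset.mem_filter, Finset.mem_range, Finset.mem_insert, Finset.mem_singleton]
        omega
      rw [hset]
      rw [Finset.card_insert_of_notMem (by simp), Finset.card_singleton]
    · rw [if_neg hi]
      have hieq : (i : ℕ) = m - 1 := by omega
      have hset : (Finset.range d).filter (fun c => min (c / 2) (m - 1) = (i : ℕ))
          = Finset.Ico (2 * (m - 1)) d := by
        ext c
        simp only [Finset.mem_filter, Finset.mem_range, Finset.mem_Ico]
        omega
      rw [hset, Nat.card_Ico]
  refine ⟨B, ?_, ?_, ?_, ?_⟩
  · intro c
    have hlt : min ((c : ℕ) / 2) (m - 1) < m := by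
      have := min_le_right ((c : ℕ) / 2) (m - 1)
      omega
    exact ⟨⟨_, hlt⟩, by simp [hB]⟩
  · intro i
    rw [hcards i]
    split_ifs <;> omega
  · intro i j hi hj
    rw [hcards i] at hi
    rw [hcards j] at hj
    have hi2 : ¬ ((i : ℕ) < m - 1) := by intro h; rw [if_pos h] at hi; omega
    have hj2 : ¬ ((j : ℕ) < m - 1) := by intro h; rw [if_pos h] at hj; omega
    have : (i : ℕ) = m - 1 := by have := i.2; omega
    have : (j : ℕ) = m - 1 := by have := j.2; omega
    apply Fin.ext
    omega
  · by_cases hm : 1 < m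
    · refine ⟨⟨0, by omega⟩, ?_⟩
      rw [hcards]
      simp only [if_pos (by simp; omega : ((⟨0, by omega⟩ : Fin m) : ℕ) < m - 1)]
    · have hm1' : m = 1 := by omega
      have hd2 : d = 2 := hm1e hm1'
      refine ⟨⟨0, by omega⟩, ?_⟩
      rw [hcards]
      simp only [hm1', hd2]
      norm_num

end Blocks

section Lower

variable {k : ℕ}

lemma escape (hd : 2 ≤ d) (hcond : 2 * k + 2 ≤ d ∨ (d = 3 ∧ k ≤ 1))
    (cops : Fin k → Vtx d) (r : Vtx d)
    (hb : ∀ i, 1 ≤ (dset (cops i) r).card) :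
    ∃ F : Finset (Fin d), F.card ≤ 2 ∧ ∀ i, 3 ≤ (dset (cops i) (flipF r F)).card := by
  classical
  have hcard_flip : ∀ (F : Finset (Fin d)) (i : Fin k),
      (dset (cops i) (flipF r F)).card
        = ((dset (cops i) r).card - (dset (cops i) r ∩ F).card)
          + (F.card - (dset (cops i) r ∩ F).card) := by
    intro F i
    rw [dset_flipF_right, card_symmDiff_eq]
  have hDle : ∀ i, (dset (cops i) r).card ≤ d := by
    intro i
    calc (dset (cops i) r).card ≤ (Finset.univ : Finset (Fin d)).card :=
        Finset.card_le_card (Finset.subset_univ _)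
      _ = d := by simp
  rcases hcond with hgen | ⟨hd3, hk1⟩
  · -- general case : 2k+2 ≤ d
    set C1 : Finset (Fin k) := Finset.univ.filter (fun i => (dset (cops i) r).card = 1) with hC1
    set C2 : Finset (Fin k) := Finset.univ.filter (fun i => (dset (cops i) r).card = 2) with hC2
    set C3 : Finset (Fin k) := Finset.univ.filter (fun i => (dset (cops i) r).card = 3) with hC3
    set C4 : Finset (Fin k) := Finset.univ.filter (fun i => (dset (cops i) r).card = 4) with hC4
    by_cases hA : C1 = ∅ ∧ (C2 ∪ C3).biUnion (fun i => dset (cops i) r) ≠ Finset.univ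
    · -- single-coordinate escape
      obtain ⟨hA1, hA2⟩ := hA
      have : ∃ j : Fin d, j ∉ (C2 ∪ C3).biUnion (fun i => dset (cops i) r) := by
        by_contra hcon
        push_neg at hcon
        exact hA2 (Finset.eq_univ_of_forall hcon)
      obtain ⟨j, hj⟩ := this
      refine ⟨{j}, by simp, ?_⟩
      intro i
      rw [hcard_flip]
      have hjD : (dset (cops i) r).card = 2 ∨ (dset (cops i) r).card = 3 → j ∉ dset (cops i) r := by
        intro hbi
        intro hjDi
        exact hj (Finset.mem_biUnion.2 ⟨i, by
          simp only [Finset.mem_union, hC2, hC3, Finset.mem_filter, Finset.mem_univ, true_and]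
          omega, hjDi⟩)
      have hbi1 : (dset (cops i) r).card ≠ 1 := by
        intro h1
        have : i ∈ C1 := by simp [hC1, h1]
        rw [hA1] at this
        simp at this
      have hint : (dset (cops i) r ∩ {j}).card ≤ 1 := by
        calc (dset (cops i) r ∩ {j}).card ≤ ({j} : Finset (Fin d)).card :=
            Finset.card_le_card Finset.inter_subset_right
          _ = 1 := by simp
      have hbi := hb i
      by_cases h23 : (dset (cops i) r).card = 2 ∨ (dset (cops i) r).card = 3
      · have hj' := hjD h23
        have : (dset (cops i) r ∩ {j}).card = 0 := by
          rw [Finset.card_eq_zero]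
          ext x
          simp only [Finset.mem_inter, Finset.mem_singleton, Finset.notMem_empty,
            iff_false, not_and]
          rintro hx rfl
          exact hj' hx
        rw [this]
        simp only [Finset.card_singleton]
        omega
      · -- b i ≥ 4 (or b i not in {1,2,3}); since b i ≥ 1 and ≠ 1,2,3 we get b i ≥ 4
        have : 4 ≤ (dset (cops i) r).card := by omega
        simp only [Finset.card_singleton]
        omega
    · -- two-coordinate escape via counting
      rw [not_and_or] at hA
      set X : Finset (Fin d) := (C1 ∪ C2).biUnion (fun i => dset (cops i) r) with hX
      set Gd : Finset (Fin d) := Finset.univ \ X with hGd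
      set t1 := C1.card with ht1
      set t2 := C2.card with ht2
      set t3 := C3.card with ht3
      set t4 := C4.card with ht4
      set s := t3 + t4 with hs
      have hdisj12 : Disjoint C1 C2 := by
        rw [Finset.disjoint_filter]
        intro i _ h1
        omega
      have hdisj34 : Disjoint C3 C4 := by
        rw [Finset.disjoint_filter]
        intro i _ h1
        omega
      have hdisj1234 : Disjoint (C1 ∪ C2) (C3 ∪ C4) := by
        simp only [Finset.disjoint_union_left, Finset.disjoint_union_right]
        refine ⟨⟨?_, ?_⟩, ⟨?_, ?_⟩⟩ <;>
          · rw [Finset.disjoint_filter]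
            intro i _ h1
            omega
      have hsumk : t1 + t2 + t3 + t4 ≤ k := by
        have h12 : (C1 ∪ C2).card = t1 + t2 := Finset.card_union_of_disjoint hdisj12
        have h34 : (C3 ∪ C4).card = t3 + t4 := Finset.card_union_of_disjoint hdisj34
        have hall : ((C1 ∪ C2) ∪ (C3 ∪ C4)).card = t1 + t2 + (t3 + t4) := by
          rw [Finset.card_union_of_disjoint hdisj1234, h12, h34]
        have : ((C1 ∪ C2) ∪ (C3 ∪ C4)).card ≤ k := by
          calc ((C1 ∪ C2) ∪ (C3 ∪ C4)).card ≤ (Finset.univ : Finset (Fin k)).card :=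
              Finset.card_le_card (Finset.subset_univ _)
            _ = k := by simp
        omega
      have hXcard : X.card ≤ t1 + 2 * t2 := by
        calc X.card ≤ ∑ i ∈ C1 ∪ C2, (dset (cops i) r).card := Finset.card_biUnion_le
          _ = ∑ i ∈ C1, (dset (cops i) r).card + ∑ i ∈ C2, (dset (cops i) r).card :=
              Finset.sum_union hdisj12
          _ = ∑ i ∈ C1, 1 + ∑ i ∈ C2, 2 := by
              congr 1
              · refine Finset.sum_congr rfl ?_
                intro i hi
                simp only [hC1, Finset.mem_filter] at hi
                exact hi.2
              · refine Finset.sum_congr rfl ?_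
                intro i hi
                simp only [hC2, Finset.mem_filter] at hi
                exact hi.2
          _ = t1 + 2 * t2 := by
              rw [Finset.sum_const, Finset.sum_const]
              simp [ht1, ht2, mul_comm]
      have hg : 2 * s + t1 + 2 ≤ Gd.card := by
        have : Gd.card = d - X.card := by
          rw [hGd, Finset.card_sdiff_of_subset (Finset.subset_univ _)]
          simp
        omega
      have hstrong : t1 ≥ 1 ∨ 2 ≤ s := by
        rcases hA with hA1 | hA2
        · left
          have : C1.Nonempty := Finset.nonempty_iff_ne_empty.2 hA1
          have := Finset.card_pos.2 this
          omega
        · right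
          -- the union over C2 ∪ C3 covers everything
          push_neg at hA2
          have hcov : d ≤ 2 * t2 + 3 * t3 := by
            have h1 : ((C2 ∪ C3).biUnion (fun i => dset (cops i) r)).card ≤ ∑ i ∈ C2 ∪ C3, (dset (cops i) r).card :=
              Finset.card_biUnion_le
            have hdisj23 : Disjoint C2 C3 := by
              rw [Finset.disjoint_filter]
              intro i _ h1
              omega
            have h2 : ∑ i ∈ C2 ∪ C3, (dset (cops i) r).card = 2 * t2 + 3 * t3 := by
              rw [Finset.sum_union hdisj23]
              have e2 : ∑ i ∈ C2, (dset (cops i) r).card = 2 * t2 := by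
                rw [Finset.sum_congr rfl (fun i hi => by
                  simp only [hC2, Finset.mem_filter] at hi
                  exact hi.2), Finset.sum_const]
                simp [ht2, mul_comm]
              have e3 : ∑ i ∈ C3, (dset (cops i) r).card = 3 * t3 := by
                rw [Finset.sum_congr rfl (fun i hi => by
                  simp only [hC3, Finset.mem_filter] at hi
                  exact hi.2), Finset.sum_const]
                simp [ht3, mul_comm]
              rw [e2, e3]
            rw [hA2] at h1
            simp only [Finset.card_univ, Fintype.card_fin] at h1
            omega
          omega
      -- counting pairs
      have hprod : 12 * s + 2 ≤ Gd.card * (Gd.card - 1) := by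
        rcases hstrong with h1 | h2
        · have hge : 2 * s + 3 ≤ Gd.card := by omega
          have hmul : (2 * s + 3) * (2 * s + 2) ≤ Gd.card * (Gd.card - 1) :=
            Nat.mul_le_mul hge (by omega)
          have hss : s ≤ s * s := by
            rcases Nat.eq_zero_or_pos s with h | h
            · simp [h]
            · exact Nat.le_mul_of_pos_left s h
          nlinarith [hmul, hss]
        · have hge : 2 * s + 2 ≤ Gd.card := by omega
          have hmul : (2 * s + 2) * (2 * s + 1) ≤ Gd.card * (Gd.card - 1) :=
            Nat.mul_le_mul hge (by omega)
          have hss : 2 * s ≤ s * s := by nlinarith [h2]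
          nlinarith [hmul, hss]
      obtain ⟨q, hq⟩ : ∃ q, q = Gd.card * (Gd.card - 1) := ⟨_, rfl⟩
      rw [← hq] at hprod
      have hchoose : 6 * s < Gd.card.choose 2 := by
        have h2 : Gd.card.choose 2 = Gd.card * (Gd.card - 1) / 2 := Nat.choose_two_right _
        rw [h2, ← hq]
        omega
      set P : Finset (Finset (Fin d)) := Gd.powersetCard 2 with hP
      set Bad : Finset (Finset (Fin d)) := (C3 ∪ C4).biUnion (fun i => (dset (cops i) r).powersetCard 2)
        with hBad
      have hPcard : P.card = Gd.card.choose 2 := by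
        rw [hP, Finset.card_powersetCard]
      have hBadcard : Bad.card ≤ 6 * s := by
        calc Bad.card ≤ ∑ i ∈ C3 ∪ C4, ((dset (cops i) r).powersetCard 2).card := Finset.card_biUnion_le
          _ ≤ ∑ _i ∈ C3 ∪ C4, 6 := by
              refine Finset.sum_le_sum ?_
              intro i hi
              rw [Finset.card_powersetCard]
              have : (dset (cops i) r).card = 3 ∨ (dset (cops i) r).card = 4 := by
                simp only [Finset.mem_union, hC3, hC4, Finset.mem_filter, Finset.mem_univ,
                  true_and] at hi
                exact hi
              rcases this with h | h <;> rw [h] <;> decide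
          _ ≤ 6 * s := by
              rw [Finset.sum_const, smul_eq_mul]
              have : (C3 ∪ C4).card ≤ s := by
                rw [hs, ht3, ht4]
                exact (Finset.card_union_le _ _)
              omega
      have hex : (P \ Bad).Nonempty := by
        rw [← Finset.card_pos]
        have h1 := Finset.le_card_sdiff Bad P
        have h2 : Bad.card < P.card :=
          lt_of_le_of_lt hBadcard (lt_of_lt_of_le hchoose (le_of_eq hPcard.symm))
        omega
      obtain ⟨F, hF⟩ := hex
      rw [Finset.mem_sdiff, hP, Finset.mem_powersetCard] at hF
      obtain ⟨⟨hFsub, hFcard⟩, hFbad⟩ := hF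
      refine ⟨F, by omega, ?_⟩
      intro i
      rw [hcard_flip, hFcard]
      have hintF : (dset (cops i) r ∩ F).card ≤ 2 := by
        calc (dset (cops i) r ∩ F).card ≤ F.card := Finset.card_le_card Finset.inter_subset_right
          _ = 2 := hFcard
      have hbi := hb i
      rcases le_or_gt ((dset (cops i) r).card) 2 with hsmall | hbig
      · -- close cop : F misses dset (cops i) r entirely
        have hDX : dset (cops i) r ⊆ X := by
          intro x hx
          refine Finset.mem_biUnion.2 ⟨i, ?_, hx⟩
          simp only [Finset.mem_union, hC1, hC2, Finset.mem_filter, Finset.mem_univ, true_and]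
          omega
        have hFD : dset (cops i) r ∩ F = ∅ := by
          ext x
          simp only [Finset.mem_inter, Finset.notMem_empty, iff_false, not_and]
          intro hx hxF
          have := hFsub hxF
          rw [hGd, Finset.mem_sdiff] at this
          exact this.2 (hDX hx)
        rw [hFD]
        simp only [Finset.card_empty]
        omega
      · rcases le_or_gt ((dset (cops i) r).card) 4 with hmid | hfar
        · -- mid cop : F not inside dset (cops i) r
          have hiC : i ∈ C3 ∪ C4 := by
            simp only [Finset.mem_union, hC3, hC4, Finset.mem_filter, Finset.mem_univ, true_and]
            omega
          have hnot : ¬ F ⊆ dset (cops i) r := by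
            intro hsub
            exact hFbad (Finset.mem_biUnion.2 ⟨i, hiC,
              Finset.mem_powersetCard.2 ⟨hsub, hFcard⟩⟩)
          have : (dset (cops i) r ∩ F).card ≤ 1 := by
            by_contra hcon
            push_neg at hcon
            have : dset (cops i) r ∩ F = F := Finset.eq_of_subset_of_card_le Finset.inter_subset_right
              (by omega)
            apply hnot
            intro x hx
            rw [← this] at hx
            exact (Finset.mem_inter.1 hx).1
          omega
        · -- far cop
          omega
  · -- special case d = 3, k ≤ 1
    rcases Nat.lt_or_ge k 1 with hk0 | hk1'
    · refine ⟨∅, by simp, ?_⟩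
      intro i
      exact absurd i.2 (by omega)
    · have hkeq : k = 1 := by omega
      subst hkeq
      rcases le_or_gt 3 ((dset (cops 0) r).card) with hfar | hclose
      · refine ⟨∅, by simp, ?_⟩
        intro i
        rw [hcard_flip]
        have : (dset (cops i) r ∩ ∅).card = 0 := by simp
        have hi0 : i = 0 := Subsingleton.elim i 0
        subst hi0
        simp only [Finset.card_empty]
        omega
      · refine ⟨Finset.univ \ dset (cops 0) r, ?_, ?_⟩
        · rw [Finset.card_sdiff_of_subset (Finset.subset_univ _)]
          have := hb 0
          simp only [Finset.card_univ, Fintype.card_fin, hd3]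
          omega
        · intro i
          have hi0 : i = 0 := Subsingleton.elim i 0
          subst hi0
          rw [hcard_flip]
          have hint : dset (cops 0) r ∩ (Finset.univ \ dset (cops 0) r) = ∅ := by
            ext x
            simp [Finset.mem_inter, Finset.mem_sdiff]
          rw [hint]
          rw [Finset.card_sdiff_of_subset (Finset.subset_univ _)]
          simp only [Finset.card_empty, Finset.card_univ, Fintype.card_fin, hd3]
          have := hb 0
          have := hDle 0
          omega

lemma ball_card (x : Vtx d) :
    (Finset.univ.filter (fun y : Vtx d => (dset x y).card ≤ 2)).card
      ≤ 1 + d + d.choose 2 := by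
  classical
  set t : Finset (Finset (Fin d)) :=
    Finset.univ.filter (fun S : Finset (Fin d) => S.card ≤ 2) with ht
  have h1 : (Finset.univ.filter (fun y : Vtx d => (dset x y).card ≤ 2)).card ≤ t.card := by
    refine Finset.card_le_card_of_injOn (fun y => dset x y) ?_ ?_
    · intro y hy
      simp only [Finset.mem_coe, Finset.mem_filter, Finset.mem_univ, true_and] at hy
      simp only [ht, Finset.mem_coe, Finset.mem_filter, Finset.mem_univ, true_and]
      exact hy
    · intro y1 _ y2 _ h
      have := congrArg (flipF x) h
      rwa [flipF_dset, flipF_dset] at this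
  refine h1.trans ?_
  have h2 : t ⊆ (Finset.univ : Finset (Fin d)).powersetCard 0
      ∪ (Finset.univ : Finset (Fin d)).powersetCard 1
      ∪ (Finset.univ : Finset (Fin d)).powersetCard 2 := by
    intro S hS
    simp only [ht, Finset.mem_filter, Finset.mem_univ, true_and] at hS
    simp only [Finset.mem_union, Finset.mem_powersetCard]
    interval_cases h : S.card
    · exact Or.inl (Or.inl ⟨Finset.subset_univ _, rfl⟩)
    · exact Or.inl (Or.inr ⟨Finset.subset_univ _, rfl⟩)
    · exact Or.inr ⟨Finset.subset_univ _, rfl⟩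
  calc t.card ≤ _ := Finset.card_le_card h2
    _ ≤ ((Finset.univ : Finset (Fin d)).powersetCard 0
          ∪ (Finset.univ : Finset (Fin d)).powersetCard 1).card
        + ((Finset.univ : Finset (Fin d)).powersetCard 2).card := Finset.card_union_le _ _
    _ ≤ ((Finset.univ : Finset (Fin d)).powersetCard 0).card
        + ((Finset.univ : Finset (Fin d)).powersetCard 1).card
        + ((Finset.univ : Finset (Fin d)).powersetCard 2).card := by
          have := Finset.card_union_le ((Finset.univ : Finset (Fin d)).powersetCard 0)
            ((Finset.univ : Finset (Fin d)).powersetCard 1)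
          omega
    _ = 1 + d + d.choose 2 := by
        rw [Finset.card_powersetCard, Finset.card_powersetCard, Finset.card_powersetCard]
        simp [Nat.choose_one_right]

lemma exists_far (hcount : k * (1 + d + d.choose 2) < 2 ^ d) (cops : Fin k → Vtx d) :
    ∃ r : Vtx d, ∀ i, 3 ≤ (dset (cops i) r).card := by
  classical
  set bad : Finset (Vtx d) := Finset.univ.biUnion
    (fun i : Fin k => Finset.univ.filter (fun y : Vtx d => (dset (cops i) y).card ≤ 2))
    with hbad
  have hbadcard : bad.card ≤ k * (1 + d + d.choose 2) := by
    calc bad.card ≤ ∑ i : Fin k,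
        (Finset.univ.filter (fun y : Vtx d => (dset (cops i) y).card ≤ 2)).card :=
        Finset.card_biUnion_le
      _ ≤ ∑ _i : Fin k, (1 + d + d.choose 2) :=
        Finset.sum_le_sum (fun i _ => ball_card (cops i))
      _ = k * (1 + d + d.choose 2) := by
        rw [Finset.sum_const, Finset.card_univ, Fintype.card_fin, smul_eq_mul]
  have hcard2 : (Finset.univ : Finset (Vtx d)).card = 2 ^ d := by
    rw [Finset.card_univ]
    rw [show Fintype.card (Vtx d) = (Fintype.card Bool) ^ (Fintype.card (Fin d)) from
      Fintype.card_fun]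
    simp
  obtain ⟨r, hr⟩ : ∃ r : Vtx d, r ∉ bad := by
    by_contra h
    push_neg at h
    have := Finset.eq_univ_of_forall h
    rw [this] at hbadcard
    omega
  refine ⟨r, fun i => ?_⟩
  by_contra hc
  push_neg at hc
  exact hr (Finset.mem_biUnion.2 ⟨i, Finset.mem_univ _,
    Finset.mem_filter.2 ⟨Finset.mem_univ _, by omega⟩⟩)

lemma cube_lt {n : ℕ} (h : 10 ≤ n) : n ^ 3 < 2 ^ n := by
  induction n, h using Nat.le_induction with
  | base => norm_num
  | succ n hn ih =>
    have h1 : (n + 1) ^ 3 ≤ 2 * n ^ 3 := by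
      nlinarith [hn, Nat.mul_le_mul_right n hn, Nat.mul_le_mul_right (n * n) hn]
    calc (n + 1) ^ 3 ≤ 2 * n ^ 3 := h1
      _ < 2 * 2 ^ n := by omega
      _ = 2 ^ (n + 1) := by rw [pow_succ]; ring

lemma count_ok {d k : ℕ} (hd : 2 ≤ d) (hk : k < (if d = 3 then 2 else d / 2)) :
    k * (1 + d + d.choose 2) < 2 ^ d := by
  have hch : d.choose 2 = d * (d - 1) / 2 := Nat.choose_two_right d
  rcases le_or_gt d 9 with h9 | h9
  · interval_cases d <;> simp_all <;> omega
  · have hkd : k < d / 2 := by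
      have hne : d ≠ 3 := by omega
      simpa [hne] using hk
    have h1 : 1 + d + d.choose 2 ≤ d * d := by
      rw [hch]
      have h10 : 10 * d ≤ d * d := Nat.mul_le_mul_right d (by omega)
      have hdd : d * (d - 1) + d = d * d := by
        obtain ⟨e, he⟩ := Nat.exists_eq_add_of_le (show 1 ≤ d by omega)
        subst he
        simp only [Nat.add_sub_cancel_left]
        ring
      omega
    calc k * (1 + d + d.choose 2) ≤ k * (d * d) := Nat.mul_le_mul_left _ h1
      _ < d * (d * d) := by
          have h0 : 0 < d * d := by positivity
          exact (Nat.mul_lt_mul_right h0).2 (by omega)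
      _ = d ^ 3 := by ring
      _ < 2 ^ d := cube_lt (by omega)

lemma lower_main (hd : 2 ≤ d) (hcond : 2 * k + 2 ≤ d ∨ (d = 3 ∧ k ≤ 1)) :
    ∀ (n : ℕ) (cops : Fin k → Vtx d) (r : Vtx d),
      (∀ i, 3 ≤ (dset (cops i) r).card) → ¬ CanCatch (hypercube d) 2 2 n cops r := by
  intro n
  induction n with
  | zero =>
    intro cops r hinv h
    obtain ⟨i, hi⟩ := h
    have := hinv i
    rw [hi, dset_self] at this
    simp at this
  | succ n ih =>
    intro cops r hinv h
    rcases h with ⟨i, hi⟩ | ⟨cops', hlegal, h⟩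
    · have := hinv i
      rw [hi, dset_self] at this
      simp at this
    · have hb : ∀ i, 1 ≤ (dset (cops' i) r).card := by
        intro i
        have htr : dset (cops i) r = symmDiff (dset (cops i) (cops' i)) (dset (cops' i) r) :=
          dset_trans _ _ _
        have h1 : (dset (cops i) r).card
            ≤ (dset (cops i) (cops' i)).card + (dset (cops' i) r).card := by
          rw [htr]
          exact card_symmDiff_le _ _
        have h2 : (dset (cops i) (cops' i)).card ≤ 2 := copStep_iff.1 (hlegal i)
        have h3 := hinv i
        omega
      rcases h with ⟨i, hi⟩ | hall
      · have := hb i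
        rw [hi, dset_self] at this
        simp at this
      · obtain ⟨F, hF2, hFfar⟩ := escape hd hcond cops' r hb
        have hrob : robberStep (hypercube d) 2 {x | ∃ i, cops' i = x} r (flipF r F) := by
          apply robberStep_of
          · rw [dset_flipF]
            exact hF2
          · intro z hz hzS
            obtain ⟨i, hi⟩ := hzS
            have := hFfar i
            rw [hi] at this
            omega
        exact ih cops' (flipF r F) hFfar (hall (flipF r F) hrob)

lemma lower_bound (hd : 2 ≤ d) (hk : k < (if d = 3 then 2 else d / 2)) :
    ¬ ∃ cops : Fin k → Vtx d, ∀ r : Vtx d, ∃ n : ℕ,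
      CanCatch (hypercube d) 2 2 n cops r := by
  rintro ⟨cops, hcops⟩
  have hcond : 2 * k + 2 ≤ d ∨ (d = 3 ∧ k ≤ 1) := by
    by_cases h3 : d = 3
    · right
      rw [h3] at hk
      simp at hk
      omega
    · left
      rw [if_neg h3] at hk
      omega
  obtain ⟨r, hr⟩ := exists_far (count_ok hd hk) cops
  obtain ⟨n, hn⟩ := hcops r
  exact lower_main hd hcond n cops r hr hn

end Lower

end S16

/-- For every `d ≥ 2`, `c_{2,2}(Q_d) = 2` if `d = 3`, and `c_{2,2}(Q_d) = ⌊d/2⌋`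
otherwise. -/
theorem statement16 (d : ℕ) (hd : 2 ≤ d) :
    copNumber (hypercube d) 2 2 = if d = 3 then 2 else d / 2 := by
  classical
  set m := if d = 3 then 2 else d / 2 with hm
  have hm1 : 1 ≤ m := by rw [hm]; split_ifs <;> omega
  have hlow : 2 * (m - 1) < d := by rw [hm]; split_ifs <;> omega
  have hhigh : d ≤ 2 * (m - 1) + 3 := by rw [hm]; split_ifs <;> omega
  have hm1e : m = 1 → d = 2 := by rw [hm]; split_ifs <;> omega
  obtain ⟨B, hcover, hcard, hone, hex2⟩ := S16.blocks_exist m d hm1 hlow hhigh hm1e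
  have hmem : m ∈ {k : ℕ | ∃ cops : Fin k → (Fin d → Bool),
      ∀ r, ∃ n, CanCatch (hypercube d) 2 2 n cops r} :=
    S16.upper_mem B hcover hcard hone hex2
  rw [copNumber]
  apply le_antisymm
  · exact Nat.sInf_le hmem
  · apply le_csInf ⟨m, hmem⟩
    intro kk hkk
    by_contra hlt
    push_neg at hlt
    exact S16.lower_bound hd (hm ▸ hlt) hkk
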